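/- arXiv:cs/9903016 — 9 statements merged into one kernel-verified Lean document; each statement's English description precedes it below -/
import Mathlib

section
/- If a plausibility measure Pl on an algebra of subsets of W satisfies: (A1) monotonicity (A ⊆ B implies Pl(A) ≤ Pl(B)), and (A2) for pairwise disjoint A, B, C, if Pl(A ∪ B) > Pl(C) and Pl(A ∪ C) > Pl(B) then Pl(A) > Pl(B ∪ C), then the conditional semantics (φ ↝ ψ holds iff Pl(⟦φ⟧) = ⊥ or Pl(⟦φ∧ψ⟧) > Pl(⟦φ∧¬ψ⟧)) validates the AND rule: from φ ↝ ψ₁ and φ ↝ ψ₂ infer φ ↝ (ψ₁ ∧ ψ₂). -/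
/-- Propositional formulas over atoms of type `α`. -/
inductive Form (α : Type) : Type
  | atom : α → Form α
  | fls : Form α
  | neg : Form α → Form α
  | conj : Form α → Form α → Form α
  | disj : Form α → Form α → Form α
  | impl : Form α → Form α → Form α

/-- Truth-value of a formula under a valuation. -/
def Form.eval {α : Type} (v : α → Bool) : Form α → Bool
  | .atom a => v a
  | .fls => false
  | .neg φ => !(Form.eval v φ)
  | .conj φ ψ => Form.eval v φ && Form.eval v ψ
  | .disj φ ψ => Form.eval v φ || Form.eval v ψ
  | .impl φ ψ => !(Form.eval v φ) || Form.eval v ψ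

/-- The set of worlds (under world-valuation `π`) satisfying `φ`. -/
def truthSet {W α : Type} (π : W → α → Bool) (φ : Form α) : Set W :=
  {w | Form.eval (π w) φ = true}

/-- Propositional validity. -/
def Taut {α : Type} (φ : Form α) : Prop := ∀ v : α → Bool, Form.eval v φ = true

/-- Propositional consequence. -/
def entails {α : Type} (Γ : Set (Form α)) (φ : Form α) : Prop :=
  ∀ v : α → Bool, (∀ γ ∈ Γ, Form.eval v γ = true) → Form.eval v φ = true

/-- Deductive closure. -/
def Cl {α : Type} (Γ : Set (Form α)) : Set (Form α) := {φ | entails Γ φ}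

/-- The conditional `φ ↝ ψ`: `Pl ⟦φ⟧ = ⊥` or `Pl ⟦φ ∧ ψ⟧ > Pl ⟦φ ∧ ¬ψ⟧`. -/
def Cond {W α D : Type} [PartialOrder D] [OrderBot D]
    (Pl : Set W → D) (π : W → α → Bool) (φ ψ : Form α) : Prop :=
  Pl (truthSet π φ) = ⊥ ∨
    Pl (truthSet π (φ.conj ψ.neg)) < Pl (truthSet π (φ.conj ψ))

/-- Satisfaction of `φ ↝ ψ` in a preferential structure (Lewis/Boutilier style). -/
def PrefSat {W α : Type} (prec : W → W → Prop) (π : W → α → Bool)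
    (φ ψ : Form α) : Prop :=
  ∀ w₁ ∈ truthSet π φ, ∃ w₂, (prec w₂ w₁ ∨ w₂ = w₁) ∧
    w₂ ∈ truthSet π (φ.conj ψ) ∧
    ∀ w₃, prec w₃ w₂ → w₃ ∈ truthSet π (φ.impl ψ)

/-- Katsuno–Mendelzon minimization: worlds in `B` closest to some world of `A`. -/
def minU {W D : Type} [PartialOrder D] (d : W → W → D) (A B : Set W) : Set W :=
  {w | w ∈ B ∧ ∃ w₀ ∈ A, ∀ w' ∈ B, ¬ d w₀ w' < d w₀ w}

theorem stmt0 {W α D : Type} [PartialOrder D] [OrderBot D] [OrderTop D]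
    (Pl : Set W → D) (π : W → α → Bool)
    (hempty : Pl (∅ : Set W) = ⊥) (huniv : Pl (Set.univ : Set W) = ⊤)
    (A1 : ∀ A B : Set W, A ⊆ B → Pl A ≤ Pl B)
    (A2 : ∀ A B C : Set W, Disjoint A B → Disjoint A C → Disjoint B C →
      Pl C < Pl (A ∪ B) → Pl B < Pl (A ∪ C) → Pl (B ∪ C) < Pl A)
    (φ ψ₁ ψ₂ : Form α)
    (h1 : Cond Pl π φ ψ₁) (h2 : Cond Pl π φ ψ₂) :
    Cond Pl π φ (ψ₁.conj ψ₂) := by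
  rcases h1 with h1 | h1
  · exact Or.inl h1
  rcases h2 with h2 | h2
  · exact Or.inl h2
  right
  set A : Set W := {w | Form.eval (π w) φ = true ∧ Form.eval (π w) ψ₁ = true ∧ Form.eval (π w) ψ₂ = true} with hA
  set B : Set W := {w | Form.eval (π w) φ = true ∧ Form.eval (π w) ψ₁ = true ∧ Form.eval (π w) ψ₂ = false} with hB
  set C : Set W := {w | Form.eval (π w) φ = true ∧ Form.eval (π w) ψ₁ = false} with hC
  have dAB : Disjoint A B := by
    rw [Set.disjoint_left]; rintro w ⟨_, _, h⟩ ⟨_, _, h'⟩; simp_all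
  have dAC : Disjoint A C := by
    rw [Set.disjoint_left]; rintro w ⟨_, h, _⟩ ⟨_, h'⟩; simp_all
  have dBC : Disjoint B C := by
    rw [Set.disjoint_left]; rintro w ⟨_, h, _⟩ ⟨_, h'⟩; simp_all
  have e1 : truthSet π (φ.conj ψ₁) = A ∪ B := by
    ext w; simp only [truthSet, Form.eval, Bool.and_eq_true, Set.mem_union, Set.mem_setOf_eq,
      hA, hB]
    constructor
    · rintro ⟨h, h'⟩
      rcases Bool.eq_false_or_eq_true (Form.eval (π w) ψ₂) with h2 | h2 <;> simp_all
    · rintro (⟨h, h', _⟩ | ⟨h, h', _⟩) <;> exact ⟨h, h'⟩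
  have e2 : truthSet π (φ.conj ψ₁.neg) = C := by
    ext w; simp [truthSet, Form.eval, hC]
  have e3 : truthSet π (φ.conj ψ₂) ⊆ A ∪ C := by
    intro w hw
    simp only [truthSet, Form.eval, Bool.and_eq_true, Set.mem_setOf_eq] at hw
    rcases Bool.eq_false_or_eq_true (Form.eval (π w) ψ₁) with h1' | h1'
    · exact Or.inl ⟨hw.1, h1', hw.2⟩
    · exact Or.inr ⟨hw.1, h1'⟩
  have e4 : B ⊆ truthSet π (φ.conj ψ₂.neg) := by
    rintro w ⟨h, _, h'⟩
    simp [truthSet, Form.eval, h, h']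
  have e5 : truthSet π (φ.conj (ψ₁.conj ψ₂).neg) = B ∪ C := by
    ext w
    simp only [truthSet, Form.eval, Bool.and_eq_true, Bool.not_eq_true', Bool.and_eq_false_iff,
      Set.mem_union, Set.mem_setOf_eq, hB, hC]
    constructor
    · rintro ⟨h, h' | h'⟩
      · exact Or.inr ⟨h, h'⟩
      · rcases Bool.eq_false_or_eq_true (Form.eval (π w) ψ₁) with h1' | h1'
        · exact Or.inl ⟨h, h1', h'⟩
        · exact Or.inr ⟨h, h1'⟩
    · rintro (⟨h, _, h'⟩ | ⟨h, h'⟩)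
      · exact ⟨h, Or.inr h'⟩
      · exact ⟨h, Or.inl h'⟩
  have e6 : truthSet π (φ.conj (ψ₁.conj ψ₂)) = A := by
    ext w; simp [truthSet, Form.eval, hA, and_assoc]
  rw [e1, e2] at h1
  have h2' : Pl B < Pl (A ∪ C) :=
    lt_of_le_of_lt (A1 _ _ e4) (lt_of_lt_of_le h2 (A1 _ _ e3))
  rw [e5, e6]
  exact A2 A B C dAB dAC dBC h1 h2'
end

section
/- If a plausibility measure Pl satisfies A1 (monotonicity) and A2 (for pairwise disjoint A, B, C: Pl(A ∪ B) > Pl(C) and Pl(A ∪ C) > Pl(B) imply Pl(A) > Pl(B ∪ C)), then the induced conditional relation validates the OR rule: from φ₁ ↝ ψ and φ₂ ↝ ψ infer (φ₁ ∨ φ₂) ↝ ψ. Here A3 (Pl(A) = Pl(B) = ⊥ implies Pl(A ∪ B) = ⊥) is also assumed. -/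
lemma ts_conj {W α : Type} (π : W → α → Bool) (φ ψ : Form α) :
    truthSet π (φ.conj ψ) = truthSet π φ ∩ truthSet π ψ := by
  ext w; simp [truthSet, Form.eval]

lemma ts_neg {W α : Type} (π : W → α → Bool) (φ : Form α) :
    truthSet π φ.neg = (truthSet π φ)ᶜ := by
  ext w; simp [truthSet, Form.eval]

lemma ts_disj {W α : Type} (π : W → α → Bool) (φ ψ : Form α) :
    truthSet π (φ.disj ψ) = truthSet π φ ∪ truthSet π ψ := by
  ext w; simp [truthSet, Form.eval]

theorem stmt1 {W α D : Type} [PartialOrder D] [OrderBot D] [OrderTop D]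
    (Pl : Set W → D) (π : W → α → Bool)
    (hempty : Pl (∅ : Set W) = ⊥) (huniv : Pl (Set.univ : Set W) = ⊤)
    (A1 : ∀ A B : Set W, A ⊆ B → Pl A ≤ Pl B)
    (A2 : ∀ A B C : Set W, Disjoint A B → Disjoint A C → Disjoint B C →
      Pl C < Pl (A ∪ B) → Pl B < Pl (A ∪ C) → Pl (B ∪ C) < Pl A)
    (A3 : ∀ A B : Set W, Pl A = ⊥ → Pl B = ⊥ → Pl (A ∪ B) = ⊥)
    (φ₁ φ₂ ψ : Form α)
    (h1 : Cond Pl π φ₁ ψ) (h2 : Cond Pl π φ₂ ψ) :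
    Cond Pl π (φ₁.disj φ₂) ψ := by
  classical
  set P1 := truthSet π φ₁ with hP1
  set P2 := truthSet π φ₂ with hP2
  set Q := truthSet π ψ with hQ
  simp only [Cond, ts_conj, ts_neg, ts_disj, ← hP1, ← hP2, ← hQ] at h1 h2 ⊢
  set Dd := (P1 ∪ P2) ∩ Q with hDd
  set E1 := P1 ∩ Qᶜ with hE1
  set E2 := (P2 ∩ P1ᶜ) ∩ Qᶜ with hE2
  have hEeq : (P1 ∪ P2) ∩ Qᶜ = E1 ∪ E2 := by
    ext w
    simp only [hE1, hE2, Set.mem_inter_iff, Set.mem_union, Set.mem_compl_iff]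
    tauto
  rcases h1 with h1 | h1
  · rcases h2 with h2 | h2
    · exact Or.inl (A3 _ _ h1 h2)
    · right
      have hDpos : ⊥ < Pl Dd :=
        lt_of_le_of_lt bot_le (lt_of_lt_of_le h2
          (A1 _ _ (Set.inter_subset_inter_left _ Set.subset_union_right)))
      have hE1bot : Pl E1 = ⊥ :=
        le_bot_iff.mp (h1 ▸ A1 E1 P1 Set.inter_subset_left)
      have hd1 : Pl E1 < Pl Dd := hE1bot ▸ hDpos
      have hd2 : Pl E2 < Pl Dd := by
        calc Pl E2 ≤ Pl (P2 ∩ Qᶜ) := A1 _ _ (Set.inter_subset_inter_left _ Set.inter_subset_left)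
          _ < Pl (P2 ∩ Q) := h2
          _ ≤ Pl Dd := A1 _ _ (Set.inter_subset_inter_left _ Set.subset_union_right)
      rw [hEeq]
      refine A2 Dd E1 E2 ?_ ?_ ?_ ?_ ?_
      · exact Set.disjoint_left.2 fun w hw hw' => hw'.2 hw.2
      · exact Set.disjoint_left.2 fun w hw hw' => hw'.2 hw.2
      · exact Set.disjoint_left.2 fun w hw hw' => hw'.1.2 hw.1
      · exact lt_of_lt_of_le hd2 (A1 _ _ Set.subset_union_left)
      · exact lt_of_lt_of_le hd1 (A1 _ _ Set.subset_union_left)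
  · right
    have hDpos : ⊥ < Pl Dd :=
      lt_of_le_of_lt bot_le (lt_of_lt_of_le h1
        (A1 _ _ (Set.inter_subset_inter_left _ Set.subset_union_left)))
    have hd1 : Pl E1 < Pl Dd :=
      lt_of_lt_of_le h1 (A1 _ _ (Set.inter_subset_inter_left _ Set.subset_union_left))
    have hd2 : Pl E2 < Pl Dd := by
      rcases h2 with h2 | h2
      · have : Pl E2 = ⊥ :=
          le_bot_iff.mp (h2 ▸ A1 E2 P2 (Set.inter_subset_left.trans Set.inter_subset_left))
        exact this ▸ hDpos
      · calc Pl E2 ≤ Pl (P2 ∩ Qᶜ) := A1 _ _ (Set.inter_subset_inter_left _ Set.inter_subset_left)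
          _ < Pl (P2 ∩ Q) := h2
          _ ≤ Pl Dd := A1 _ _ (Set.inter_subset_inter_left _ Set.subset_union_right)
    rw [hEeq]
    refine A2 Dd E1 E2 ?_ ?_ ?_ ?_ ?_
    · exact Set.disjoint_left.2 fun w hw hw' => hw'.2 hw.2
    · exact Set.disjoint_left.2 fun w hw hw' => hw'.2 hw.2
    · exact Set.disjoint_left.2 fun w hw hw' => hw'.1.2 hw.1
    · exact lt_of_lt_of_le hd2 (A1 _ _ Set.subset_union_left)
    · exact lt_of_lt_of_le hd1 (A1 _ _ Set.subset_union_left)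
end

section
/- In a qualitative plausibility structure, the conditional relation validates Cautious Monotonicity (CM): if φ ↝ ψ₁ and φ ↝ ψ₂ both hold, then (φ ∧ ψ₁) ↝ ψ₂ holds. -/
theorem stmt2 {W α D : Type} [PartialOrder D] [OrderBot D] [OrderTop D]
    (Pl : Set W → D) (π : W → α → Bool)
    (hempty : Pl (∅ : Set W) = ⊥) (huniv : Pl (Set.univ : Set W) = ⊤)
    (A1 : ∀ A B : Set W, A ⊆ B → Pl A ≤ Pl B)
    (A2 : ∀ A B C : Set W, Disjoint A B → Disjoint A C → Disjoint B C →
      Pl C < Pl (A ∪ B) → Pl B < Pl (A ∪ C) → Pl (B ∪ C) < Pl A)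
    (A3 : ∀ A B : Set W, Pl A = ⊥ → Pl B = ⊥ → Pl (A ∪ B) = ⊥)
    (φ ψ₁ ψ₂ : Form α)
    (h1 : Cond Pl π φ ψ₁) (h2 : Cond Pl π φ ψ₂) :
    Cond Pl π (φ.conj ψ₁) ψ₂ := by
  set A := truthSet π ((φ.conj ψ₁).conj ψ₂) with hA
  set B := truthSet π ((φ.conj ψ₁).conj ψ₂.neg) with hB
  set C := truthSet π (φ.conj ψ₁.neg) with hC
  rcases h1 with h1 | h1
  · left
    have hsub : truthSet π (φ.conj ψ₁) ⊆ truthSet π φ := by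
      intro w hw
      simp only [truthSet, Form.eval, Set.mem_setOf_eq, Bool.and_eq_true] at *
      exact hw.1
    have := A1 _ _ hsub
    rw [h1] at this
    exact le_bot_iff.mp this
  rcases h2 with h2 | h2
  · exfalso
    have hsub : truthSet π (φ.conj ψ₁) ⊆ truthSet π φ := by
      intro w hw
      simp only [truthSet, Form.eval, Set.mem_setOf_eq, Bool.and_eq_true] at *
      exact hw.1
    have hb : Pl (truthSet π (φ.conj ψ₁)) = ⊥ :=
      le_bot_iff.mp ((A1 _ _ hsub).trans_eq h2)
    rw [hb] at h1
    exact absurd h1 (not_lt_bot)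
  right
  have hAB : truthSet π (φ.conj ψ₁) = A ∪ B := by
    ext w
    simp only [hA, hB, truthSet, Form.eval, Set.mem_setOf_eq, Set.mem_union,
      Bool.and_eq_true, Bool.not_eq_true']
    cases Form.eval (π w) ψ₂ <;> tauto
  have hAC : truthSet π (φ.conj ψ₂) ⊆ A ∪ C := by
    intro w hw
    simp only [hA, hC, truthSet, Form.eval, Set.mem_setOf_eq, Set.mem_union,
      Bool.and_eq_true, Bool.not_eq_true'] at *
    cases h : Form.eval (π w) ψ₁ <;> tauto
  have hBsub : B ⊆ truthSet π (φ.conj ψ₂.neg) := by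
    intro w hw
    simp only [hB, truthSet, Form.eval, Set.mem_setOf_eq, Bool.and_eq_true] at *
    tauto
  have dAB : Disjoint A B := by
    rw [Set.disjoint_left]
    intro w hw hw'
    simp only [hA, hB, truthSet, Form.eval, Set.mem_setOf_eq, Bool.and_eq_true,
      Bool.not_eq_true'] at hw hw'
    rw [hw.2] at hw'; exact Bool.true_eq_false.mp hw'.2 |>.elim
  have dAC : Disjoint A C := by
    rw [Set.disjoint_left]
    intro w hw hw'
    simp only [hA, hC, truthSet, Form.eval, Set.mem_setOf_eq, Bool.and_eq_true,
      Bool.not_eq_true'] at hw hw'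
    rw [hw.1.2] at hw'; exact Bool.true_eq_false.mp hw'.2 |>.elim
  have dBC : Disjoint B C := by
    rw [Set.disjoint_left]
    intro w hw hw'
    simp only [hB, hC, truthSet, Form.eval, Set.mem_setOf_eq, Bool.and_eq_true,
      Bool.not_eq_true'] at hw hw'
    rw [hw.1.2] at hw'; exact Bool.true_eq_false.mp hw'.2 |>.elim
  have h1' : Pl C < Pl (A ∪ B) := by rw [← hAB]; exact h1
  have h2' : Pl B < Pl (A ∪ C) :=
    lt_of_le_of_lt (A1 _ _ hBsub) (lt_of_lt_of_le h2 (A1 _ _ hAC))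
  have key := A2 A B C dAB dAC dBC h1' h2'
  exact lt_of_le_of_lt (A1 B (B ∪ C) Set.subset_union_left) key
end

section
/- For any preference ordering (strict partial order) ≺ on a set W of worlds, there exists a plausibility measure Pl on subsets of W (valued in the set of downward-closed structures obtained by closing the pointwise dual order under least upper bounds) such that for all formulas φ, ψ: the preferential structure (W, ≺, π) satisfies φ ↝ ψ (in the Lewis/Boutilier sense) if and only if the plausibility structure (W, Pl, π) satisfies φ ↝ ψ. -/
/-!
Take the plausibility of a set of worlds to be the set itself, and call `Y` more plausible than
`X` when every world of `X ∪ Y` lies above a world of `Y` that has no world of `X` below it.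
Transitivity of `≺` makes this a strict order with bottom `∅`, and for the partition
`⟦φ⟧ = ⟦φ ∧ ¬ψ⟧ ∪ ⟦φ ∧ ψ⟧` the comparison `⟦φ ∧ ¬ψ⟧ < ⟦φ ∧ ψ⟧` is exactly the preferential
clause for `φ ↝ ψ`.
-/

open Relation

variable {W : Type}

def Dominates (r : W → W → Prop) (X Y : Set W) : Prop :=
  (X ∪ Y).Nonempty ∧
    ∀ w ∈ X ∪ Y, ∃ y ∈ Y, ReflGen r y w ∧ ∀ z ∈ X, ¬ ReflGen r z y

section Dominates

variable {r : W → W → Prop}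

theorem Dominates.irrefl (X : Set W) : ¬ Dominates r X X := by
  rintro ⟨⟨w, hw⟩, hdom⟩
  obtain ⟨y, hy, -, hmin⟩ := hdom w hw
  exact hmin y hy ReflGen.refl

theorem Dominates.trans [IsTrans W r] {X Y Z : Set W} (hXY : Dominates r X Y)
    (hYZ : Dominates r Y Z) : Dominates r X Z := by
  obtain ⟨-, hXY⟩ := hXY
  obtain ⟨⟨v, hv⟩, hYZ⟩ := hYZ
  -- a world of `Z` with no world of `Y` below it has no world of `X` below it either,
  -- since every world of `X` lies above a world of `Y`
  have lift : ∀ w ∈ Y ∪ Z, ∃ z ∈ Z, ReflGen r z w ∧ ∀ x ∈ X, ¬ ReflGen r x z := by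
    intro w hw
    obtain ⟨z, hz, hzw, hminY⟩ := hYZ w hw
    refine ⟨z, hz, hzw, fun x hx hxz => ?_⟩
    obtain ⟨y, hy, hyx, -⟩ := hXY x (.inl hx)
    exact hminY y hy (_root_.trans hyx hxz)
  obtain ⟨z, hz, -⟩ := lift v hv
  refine ⟨⟨z, .inr hz⟩, ?_⟩
  rintro w (hw | hw)
  · obtain ⟨y, hy, hyw, -⟩ := hXY w (.inl hw)
    obtain ⟨z, hz, hzy, hmin⟩ := lift y (.inl hy)
    exact ⟨z, hz, _root_.trans hzy hyw, hmin⟩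
  · exact lift w (.inr hw)

theorem Dominates.empty_left {Y : Set W} (hY : Y.Nonempty) : Dominates r ∅ Y :=
  ⟨by simpa using hY, fun w hw => ⟨w, by simpa using hw, ReflGen.refl, fun _ hz => hz.elim⟩⟩

end Dominates

structure PlausibilityValue (r : W → W → Prop) where
  ofSet ::
  toSet : Set W

namespace PlausibilityValue

variable {r : W → W → Prop}

instance [IsTrans W r] : PartialOrder (PlausibilityValue r) :=
  @partialOrderOfSO _ (fun X Y => Dominates r X.toSet Y.toSet)
    { irrefl X := Dominates.irrefl X.toSet, trans _ _ _ := Dominates.trans }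

instance [IsTrans W r] : OrderBot (PlausibilityValue r) where
  bot := ofSet ∅
  bot_le X := by
    rcases Set.eq_empty_or_nonempty X.toSet with hX | hX
    · exact Or.inl (congrArg ofSet hX.symm)
    · exact Or.inr (Dominates.empty_left hX)

theorem ofSet_eq_bot [IsTrans W r] {X : Set W} : ofSet (r := r) X = ⊥ ↔ X = ∅ :=
  ⟨congrArg toSet, congrArg ofSet⟩

theorem ofSet_lt_ofSet [IsTrans W r] {X Y : Set W} :
    ofSet (r := r) X < ofSet Y ↔ Dominates r X Y :=
  Iff.rfl

end PlausibilityValue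

section TruthSet

variable {α : Type} (π : W → α → Bool) (φ ψ : Form α)

theorem truthSet_impl_eq_compl : truthSet π (φ.impl ψ) = (truthSet π (φ.conj ψ.neg))ᶜ := by
  ext w
  simp only [truthSet, Form.eval, Set.mem_compl_iff, Set.mem_ofPred_eq]
  cases Form.eval (π w) φ <;> cases Form.eval (π w) ψ <;> decide

theorem truthSet_eq_union :
    truthSet π φ = truthSet π (φ.conj ψ.neg) ∪ truthSet π (φ.conj ψ) := by
  ext w
  cases h : Form.eval (π w) ψ <;> simp [truthSet, Form.eval, h]

theorem disjoint_truthSet_conj_neg :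
    Disjoint (truthSet π (φ.conj ψ.neg)) (truthSet π (φ.conj ψ)) :=
  Set.disjoint_left.2 fun w => by simp_all [truthSet, Form.eval]

end TruthSet

theorem forall_exists_minimal_iff_dominates {r : W → W → Prop} {C B : Set W}
    (hCB : Disjoint C B) :
    (∀ w ∈ C ∪ B, ∃ y, (r y w ∨ y = w) ∧ y ∈ B ∧ ∀ z, r z y → z ∉ C) ↔
      C ∪ B = ∅ ∨ Dominates r C B := by
  constructor
  · intro h
    refine (Set.eq_empty_or_nonempty (C ∪ B)).imp_right fun hne => ⟨hne, fun w hw => ?_⟩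
    obtain ⟨y, hyw, hy, hmin⟩ := h w hw
    refine ⟨y, hy, hyw.elim .single (· ▸ .refl), fun z hz hzy => ?_⟩
    cases hzy with
    | refl => exact Set.disjoint_left.1 hCB hz hy
    | single hzy => exact hmin z hzy hz
  · rintro (hempty | ⟨-, hdom⟩) w hw
    · simp [hempty] at hw
    · obtain ⟨y, hy, hyw, hmin⟩ := hdom w hw
      refine ⟨y, ?_, hy, fun z hzy hz => hmin z hz (.single hzy)⟩
      cases hyw with
      | refl => exact .inr rfl
      | single h => exact .inl h

theorem prefSat_iff_cond {α : Type} {r : W → W → Prop} [IsTrans W r] (π : W → α → Bool)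
    (φ ψ : Form α) :
    PrefSat r π φ ψ ↔ Cond (PlausibilityValue.ofSet (r := r)) π φ ψ := by
  rw [Cond, PlausibilityValue.ofSet_eq_bot, PlausibilityValue.ofSet_lt_ofSet,
    truthSet_eq_union π φ ψ,
    ← forall_exists_minimal_iff_dominates (disjoint_truthSet_conj_neg π φ ψ),
    ← truthSet_eq_union π φ ψ]
  simp only [PrefSat, truthSet_impl_eq_compl, Set.mem_compl_iff]

theorem stmt4_general {W α : Type} (prec : W → W → Prop)
    (htrans : ∀ w₁ w₂ w₃, prec w₁ w₂ → prec w₂ w₃ → prec w₁ w₃)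
    (π : W → α → Bool) :
    ∃ (D : Type) (_ : PartialOrder D) (_ : OrderBot D) (Pl : Set W → D),
      ∀ φ ψ : Form α, PrefSat prec π φ ψ ↔ Cond Pl π φ ψ :=
  have : IsTrans W prec := ⟨htrans⟩
  ⟨PlausibilityValue prec, inferInstance, inferInstance, PlausibilityValue.ofSet,
    prefSat_iff_cond π⟩

theorem stmt4 {W α : Type} (prec : W → W → Prop)
    (hirr : ∀ w, ¬ prec w w)
    (htrans : ∀ w₁ w₂ w₃, prec w₁ w₂ → prec w₂ w₃ → prec w₁ w₃)
    (π : W → α → Bool) :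
    ∃ (D : Type) (_ : PartialOrder D) (_ : OrderBot D) (Pl : Set W → D),
      ∀ φ ψ : Form α, PrefSat prec π φ ψ ↔ Cond Pl π φ ψ :=
  stmt4_general prec htrans π
end

section
/- Let ∘ be an AGM revision operator and K a belief set. Then Δ = {φ ↝ ψ : ψ ∈ K ∘ φ} is closed under the OR rule: if φ₁ ↝ ψ ∈ Δ and φ₂ ↝ ψ ∈ Δ, then (φ₁ ∨ φ₂) ↝ ψ ∈ Δ. -/
theorem stmt6 {α : Type} (K : Set (Form α)) (rev : Form α → Set (Form α))
    (hK : Cl K = K)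
    (R1 : ∀ φ, Cl (rev φ) = rev φ)
    (R2 : ∀ φ, φ ∈ rev φ)
    (R3 : ∀ φ, rev φ ⊆ Cl (K ∪ {φ}))
    (R4 : ∀ φ, Form.neg φ ∉ K → Cl (K ∪ {φ}) ⊆ rev φ)
    (R5 : ∀ φ, rev φ = Cl {Form.fls} ↔ Taut (Form.neg φ))
    (R6 : ∀ φ ψ, (∀ v, Form.eval v φ = Form.eval v ψ) → rev φ = rev ψ)
    (R7 : ∀ φ ψ, rev (φ.conj ψ) ⊆ Cl (rev φ ∪ {ψ}))
    (R8 : ∀ φ ψ, Form.neg ψ ∉ rev φ → Cl (rev φ ∪ {ψ}) ⊆ rev (φ.conj ψ))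
    (φ₁ φ₂ ψ : Form α) (h1 : ψ ∈ rev φ₁) (h2 : ψ ∈ rev φ₂) :
    ψ ∈ rev (φ₁.disj φ₂) := by
  set χ := Form.disj φ₁ φ₂ with hχdef
  have e1 : rev (χ.conj φ₁) = rev φ₁ := R6 _ _ (by
    intro v; simp [Form.eval, hχdef]; cases Form.eval v φ₁ <;> simp)
  have e2 : rev (χ.conj φ₂) = rev φ₂ := R6 _ _ (by
    intro v; simp [Form.eval, hχdef]; cases Form.eval v φ₂ <;> simp)
  have hs1 : ψ ∈ Cl (rev χ ∪ {φ₁}) := R7 χ φ₁ (e1 ▸ h1)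
  have hs2 : ψ ∈ Cl (rev χ ∪ {φ₂}) := R7 χ φ₂ (e2 ▸ h2)
  have hmem : ψ ∈ Cl (rev χ) := by
    intro v hv
    have hev : Form.eval v χ = true := hv χ (R2 χ)
    have hor : Form.eval v φ₁ = true ∨ Form.eval v φ₂ = true := by
      simpa [Form.eval, hχdef, Bool.or_eq_true] using hev
    rcases hor with h | h
    · exact hs1 v (by rintro γ (hγ | rfl); exacts [hv γ hγ, h])
    · exact hs2 v (by rintro γ (hγ | rfl); exacts [hv γ hγ, h])
  rwa [R1] at hmem
end

section
/- Let ∘ be an AGM revision operator and K a belief set. Then Δ = {φ ↝ ψ : ψ ∈ K ∘ φ} is closed under Cautious Monotonicity: if φ ↝ ψ₁ ∈ Δ and φ ↝ ψ₂ ∈ Δ, then (φ ∧ ψ₁) ↝ ψ₂ ∈ Δ. -/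
theorem stmt7 {α : Type} (K : Set (Form α)) (rev : Form α → Set (Form α))
    (hK : Cl K = K)
    (R1 : ∀ φ, Cl (rev φ) = rev φ)
    (R2 : ∀ φ, φ ∈ rev φ)
    (R3 : ∀ φ, rev φ ⊆ Cl (K ∪ {φ}))
    (R4 : ∀ φ, Form.neg φ ∉ K → Cl (K ∪ {φ}) ⊆ rev φ)
    (R5 : ∀ φ, rev φ = Cl {Form.fls} ↔ Taut (Form.neg φ))
    (R6 : ∀ φ ψ, (∀ v, Form.eval v φ = Form.eval v ψ) → rev φ = rev ψ)
    (R7 : ∀ φ ψ, rev (φ.conj ψ) ⊆ Cl (rev φ ∪ {ψ}))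
    (R8 : ∀ φ ψ, Form.neg ψ ∉ rev φ → Cl (rev φ ∪ {ψ}) ⊆ rev (φ.conj ψ))
    (φ ψ₁ ψ₂ : Form α) (h1 : ψ₁ ∈ rev φ) (h2 : ψ₂ ∈ rev φ) :
    ψ₂ ∈ rev (φ.conj ψ₁) := by
  by_cases h : Form.neg ψ₁ ∈ rev φ
  · -- rev φ inconsistent: rev φ = Cl {fls}, so ¬φ is a tautology
    have hrev : rev φ = Cl {Form.fls} := by
      ext χ
      constructor
      · intro _ v hv
        have hf := hv Form.fls rfl
        simp [Form.eval] at hf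
      · intro _
        have : χ ∈ Cl (rev φ) := by
          intro v hv
          have ht := hv ψ₁ h1
          have hf := hv (Form.neg ψ₁) h
          simp [Form.eval, ht] at hf
        rwa [R1 φ] at this
    have htaut : Taut (Form.neg φ) := (R5 φ).mp hrev
    have htaut2 : Taut (Form.neg (φ.conj ψ₁)) := by
      intro v
      have := htaut v
      simp [Form.eval] at this ⊢
      simp [this]
    have hrev2 : rev (φ.conj ψ₁) = Cl {Form.fls} := (R5 _).mpr htaut2
    rw [hrev2]
    intro v hv
    have hf := hv Form.fls rfl
    simp [Form.eval] at hf
  · exact R8 φ ψ₁ h (fun v hv => hv ψ₂ (Or.inl h2))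
end

section
/- Let (W, Pl, π) be a plausibility structure in which Pl is ranked (totally preordered with Pl(A ∪ B) = max(Pl(A), Pl(B))), every world's valuation is propositionally consistent, and Pl(⟦φ⟧) > ⊥ for every consistent formula φ. Define K = {φ : true ↝ φ holds} and K ∘ φ = {ψ : φ ↝ ψ holds} (using the conditional semantics). Then the operator ∘ applied to K satisfies the AGM postulates R1–R8. -/
/-!
Write `A = ⟦φ⟧`. On a ranked plausibility measure, a finite union of sets each strictly less
plausible than `A` is still strictly less plausible than `A`. Hence, when `Pl A ≠ ⊥`, the revised
belief set `{ψ | φ ↝ ψ}` is `{ψ | Pl (A ∩ ⟦ψ⟧ᶜ) < Pl A}`, and propositional compactness shows that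
this set is deductively closed. Revising by `φ ∧ ψ` when `¬ψ` is not believed after `φ` does not
lower the plausibility of the antecedent, which yields R7 and R8; R3 and R4 are their instances at
`φ = ⊤`.
-/

open Set

structure IsRankedPlausibility {W D : Type} [PartialOrder D] [OrderBot D]
    (Pl : Set W → D) : Prop where
  map_empty : Pl ∅ = ⊥
  mono : Monotone Pl
  union_eq : ∀ A B, Pl (A ∪ B) = Pl A ∨ Pl (A ∪ B) = Pl B

def revision {W α D : Type} [PartialOrder D] [OrderBot D]
    (Pl : Set W → D) (π : W → α → Bool) (φ : Form α) : Set (Form α) :=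
  {ψ | Cond Pl π φ ψ}

section Propositional

variable {α : Type}

theorem Form.continuous_eval (φ : Form α) : Continuous fun v : α → Bool => φ.eval v := by
  have hbin (f : Bool → Bool → Bool) {g h : (α → Bool) → Bool} (hg : Continuous g)
      (hh : Continuous h) : Continuous fun v => f (g v) (h v) :=
    (continuous_of_discreteTopology (f := fun p : Bool × Bool => f p.1 p.2)).comp
      (hg.prodMk hh)
  induction φ with
  | atom a => exact continuous_apply a
  | fls => exact continuous_const
  | neg φ ih => exact continuous_of_discreteTopology.comp ih
  | conj φ ψ ihφ ihψ => exact hbin (· && ·) ihφ ihψ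
  | disj φ ψ ihφ ihψ => exact hbin (· || ·) ihφ ihψ
  | impl φ ψ ihφ ihψ => exact hbin (fun a b => !a || b) ihφ ihψ

theorem entails.exists_finset_subset {Γ : Set (Form α)} {χ : Form α} (h : entails Γ χ) :
    ∃ Δ : Finset (Form α), ↑Δ ⊆ Γ ∧ entails ↑Δ χ := by
  classical
  have hclosed (φ : Form α) (b : Bool) : IsClosed {v : α → Bool | φ.eval v = b} :=
    isClosed_discrete {b} |>.preimage φ.continuous_eval
  have hempty : {v | χ.eval v = false} ∩ ⋂ γ : Γ, {v | γ.1.eval v = true} = ∅ := by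
    ext v
    simp only [mem_inter_iff, mem_iInter, mem_ofPred_eq, mem_empty_iff_false, iff_false]
    exact fun ⟨hχ, hΓ⟩ => by simp [h v fun γ hγ => hΓ ⟨γ, hγ⟩] at hχ
  obtain ⟨t, ht⟩ := (hclosed χ false).isCompact.elim_finite_subfamily_closed _
    (fun γ : Γ => hclosed γ.1 true) hempty
  refine ⟨t.image Subtype.val, by simp, fun v hv => ?_⟩
  by_contra hχ
  have hvt : v ∈ {v | χ.eval v = false} ∩ ⋂ γ ∈ t, {v | γ.1.eval v = true} :=
    ⟨by simpa using hχ, mem_iInter₂.mpr fun γ hγ => hv γ.1 (Finset.mem_image_of_mem _ hγ)⟩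
  rwa [ht] at hvt

theorem subset_cl (Γ : Set (Form α)) : Γ ⊆ Cl Γ := fun _ hγ _ hv => hv _ hγ

theorem cl_fls : Cl {(Form.fls : Form α)} = univ :=
  eq_univ_of_forall fun _ v hv => by simpa [Form.eval] using hv Form.fls rfl

end Propositional

section TruthSet

variable {W α : Type} (π : W → α → Bool) (φ ψ : Form α)

@[simp] theorem truthSet_fls : truthSet π (Form.fls : Form α) = ∅ := by
  ext; simp [truthSet, Form.eval]

@[simp] theorem truthSet_neg : truthSet π φ.neg = (truthSet π φ)ᶜ := by
  ext; simp [truthSet, Form.eval]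

@[simp] theorem truthSet_conj : truthSet π (φ.conj ψ) = truthSet π φ ∩ truthSet π ψ := by
  ext; simp [truthSet, Form.eval]

@[simp] theorem truthSet_impl : truthSet π (φ.impl ψ) = (truthSet π φ)ᶜ ∪ truthSet π ψ := by
  ext; simp [truthSet, Form.eval, or_iff_not_imp_left]

theorem truthSet_congr {φ ψ : Form α} (h : ∀ v, φ.eval v = ψ.eval v) :
    truthSet π φ = truthSet π ψ := by
  ext w; simp [truthSet, h]

end TruthSet

namespace IsRankedPlausibility

variable {W D : Type} [PartialOrder D] [OrderBot D] {Pl : Set W → D}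

theorem union_lt (hPl : IsRankedPlausibility Pl) {A B : Set W} {c : D} (hA : Pl A < c)
    (hB : Pl B < c) : Pl (A ∪ B) < c := by
  rcases hPl.union_eq A B with h | h <;> rwa [h]

theorem biUnion_lt (hPl : IsRankedPlausibility Pl) {ι : Type} (s : Finset ι) (A : ι → Set W)
    {c : D} (hc : ⊥ < c) (h : ∀ i ∈ s, Pl (A i) < c) : Pl (⋃ i ∈ s, A i) < c := by
  classical
  induction s using Finset.induction_on with
  | empty => simpa [hPl.map_empty] using hc
  | insert i s _ ih =>
    rw [Finset.set_biUnion_insert]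
    exact hPl.union_lt (h i (by simp)) (ih fun j hj => h j (by simp [hj]))

theorem lt_inter_iff (hPl : IsRankedPlausibility Pl) (A B : Set W) :
    Pl (A ∩ Bᶜ) < Pl (A ∩ B) ↔ Pl (A ∩ Bᶜ) < Pl A := by
  refine ⟨fun h => h.trans_le (hPl.mono inter_subset_left), fun h => ?_⟩
  rcases hPl.union_eq (A ∩ B) (A ∩ Bᶜ) with hA | hA <;> rw [inter_union_compl] at hA
  · rwa [← hA]
  · exact absurd hA h.ne'

variable {α : Type} {π : W → α → Bool}

theorem cond_iff (hPl : IsRankedPlausibility Pl) (φ ψ : Form α) :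
    Cond Pl π φ ψ ↔
      Pl (truthSet π φ) = ⊥ ∨ Pl (truthSet π φ ∩ (truthSet π ψ)ᶜ) < Pl (truthSet π φ) := by
  simp only [Cond, truthSet_conj, truthSet_neg, hPl.lt_inter_iff]

theorem lt_of_entails (hPl : IsRankedPlausibility Pl) {A : Set W} (hA : ⊥ < Pl A)
    {Γ : Set (Form α)} (hΓ : ∀ γ ∈ Γ, Pl (A ∩ (truthSet π γ)ᶜ) < Pl A) {χ : Form α}
    (hχ : entails Γ χ) : Pl (A ∩ (truthSet π χ)ᶜ) < Pl A := by
  obtain ⟨Δ, hΔΓ, hΔχ⟩ := hχ.exists_finset_subset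
  calc Pl (A ∩ (truthSet π χ)ᶜ)
      ≤ Pl (⋃ δ ∈ Δ, A ∩ (truthSet π δ)ᶜ) := hPl.mono fun w ⟨hwA, hwχ⟩ => by
        by_contra hw
        simp only [mem_iUnion, mem_inter_iff, mem_compl_iff, not_exists, not_and,
          not_not] at hw
        exact hwχ (hΔχ (π w) fun δ hδ => hw δ hδ hwA)
    _ < Pl A := hPl.biUnion_lt Δ _ hA fun δ hδ => hΓ δ (hΔΓ hδ)

theorem mem_revision_self (hPl : IsRankedPlausibility Pl) (φ : Form α) :
    φ ∈ revision Pl π φ := by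
  rw [revision, mem_ofPred_eq, hPl.cond_iff, inter_compl_self, hPl.map_empty]
  exact eq_or_ne _ ⊥ |>.imp_right bot_lt_iff_ne_bot.mpr

theorem cl_revision (hPl : IsRankedPlausibility Pl) (φ : Form α) :
    Cl (revision Pl π φ) = revision Pl π φ := by
  refine (subset_cl _).antisymm' fun χ hχ => ?_
  simp only [revision, mem_ofPred_eq, hPl.cond_iff]
  refine (eq_or_ne _ ⊥).imp_right fun hφ => ?_
  refine hPl.lt_of_entails (bot_lt_iff_ne_bot.mpr hφ) (fun γ hγ => ?_) hχ
  exact (hPl.cond_iff φ γ).mp hγ |>.resolve_left hφ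

theorem revision_eq_cl_fls_iff (hPl : IsRankedPlausibility Pl) {φ : Form α}
    (hpos : (∃ v, φ.eval v = true) → ⊥ < Pl (truthSet π φ)) :
    revision Pl π φ = Cl {Form.fls} ↔ Taut φ.neg := by
  have hTaut : Taut φ.neg ↔ ¬∃ v, φ.eval v = true := by simp [Taut, Form.eval]
  rw [cl_fls, hTaut, eq_univ_iff_forall]
  constructor
  · intro h hsat
    have := (hPl.cond_iff φ Form.fls).mp (h Form.fls)
    simp only [truthSet_fls, compl_empty, inter_univ, lt_self_iff_false, or_false] at this
    exact (hpos hsat).ne' this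
  · intro hunsat ψ
    have hφ : truthSet π φ = ∅ := eq_empty_of_forall_notMem fun w hw => hunsat ⟨π w, hw⟩
    exact Or.inl (by rw [hφ, hPl.map_empty])

theorem revision_conj_subset (hPl : IsRankedPlausibility Pl) (φ ψ : Form α) :
    revision Pl π (φ.conj ψ) ⊆ Cl (revision Pl π φ ∪ {ψ}) := by
  intro χ hχ v hv
  suffices hψχ : ψ.impl χ ∈ revision Pl π φ by
    simpa [Form.eval, hv ψ (Or.inr rfl)] using hv _ (Or.inl hψχ)
  set A := truthSet π φ
  simp only [revision, mem_ofPred_eq, hPl.cond_iff, truthSet_conj, truthSet_impl, compl_union,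
    compl_compl, ← inter_assoc] at hχ ⊢
  refine (eq_or_ne (Pl A) ⊥).imp_right fun hA => ?_
  rcases hχ with hAψ | hlt
  · exact (hPl.mono inter_subset_left).trans_lt (hAψ ▸ bot_lt_iff_ne_bot.mpr hA)
  · exact hlt.trans_le (hPl.mono inter_subset_left)

theorem cl_revision_union_subset (hPl : IsRankedPlausibility Pl) (φ ψ : Form α)
    (hψ : ψ.neg ∉ revision Pl π φ) :
    Cl (revision Pl π φ ∪ {ψ}) ⊆ revision Pl π (φ.conj ψ) := by
  simp only [revision, mem_ofPred_eq, hPl.cond_iff, truthSet_neg, compl_compl, not_or] at hψ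
  obtain ⟨hφ, hψφ⟩ := hψ
  have hAψ : Pl (truthSet π φ ∩ truthSet π ψ) = Pl (truthSet π φ) :=
    (hPl.mono inter_subset_left).lt_or_eq.resolve_left hψφ
  have hAψ_pos : ⊥ < Pl (truthSet π φ ∩ truthSet π ψ) := by
    rw [hAψ]; exact bot_lt_iff_ne_bot.mpr hφ
  intro χ hχ
  simp only [revision, mem_ofPred_eq, hPl.cond_iff, truthSet_conj]
  refine Or.inr (hPl.lt_of_entails hAψ_pos ?_ hχ)
  rintro γ (hγ | rfl)
  · rw [hAψ]
    refine (hPl.mono ?_).trans_lt (((hPl.cond_iff φ γ).mp hγ).resolve_left hφ)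
    exact inter_subset_inter_left _ inter_subset_left
  · rwa [inter_assoc, inter_compl_self, inter_empty, hPl.map_empty]

end IsRankedPlausibility

theorem revision_congr {W α D : Type} [PartialOrder D] [OrderBot D] {Pl : Set W → D}
    {π : W → α → Bool} {φ ψ : Form α} (h : ∀ v, φ.eval v = ψ.eval v) :
    revision Pl π φ = revision Pl π ψ := by
  ext χ
  simp only [revision, mem_ofPred_eq, Cond, truthSet_conj, truthSet_congr π h]

theorem stmt11_general {W α D : Type} [PartialOrder D] [OrderBot D]
    (Pl : Set W → D) (π : W → α → Bool)
    (hempty : Pl (∅ : Set W) = ⊥)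
    (A1 : ∀ A B : Set W, A ⊆ B → Pl A ≤ Pl B)
    (hmax : ∀ A B : Set W, Pl (A ∪ B) = Pl A ∨ Pl (A ∪ B) = Pl B)
    (hpos : ∀ φ : Form α, (∃ v, Form.eval v φ = true) → ⊥ < Pl (truthSet π φ))
    (K : Set (Form α)) (hKdef : K = {ψ | Cond Pl π (Form.neg Form.fls) ψ})
    (rev : Form α → Set (Form α)) (hrev : ∀ φ, rev φ = {ψ | Cond Pl π φ ψ}) :
    (∀ φ, Cl (rev φ) = rev φ) ∧
    (∀ φ, φ ∈ rev φ) ∧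
    (∀ φ, rev φ ⊆ Cl (K ∪ {φ})) ∧
    (∀ φ, Form.neg φ ∉ K → Cl (K ∪ {φ}) ⊆ rev φ) ∧
    (∀ φ, rev φ = Cl {Form.fls} ↔ Taut (Form.neg φ)) ∧
    (∀ φ ψ, (∀ v, Form.eval v φ = Form.eval v ψ) → rev φ = rev ψ) ∧
    (∀ φ ψ, rev (φ.conj ψ) ⊆ Cl (rev φ ∪ {ψ})) ∧
    (∀ φ ψ, Form.neg ψ ∉ rev φ → Cl (rev φ ∪ {ψ}) ⊆ rev (φ.conj ψ)) := by
  have hPl : IsRankedPlausibility Pl := ⟨hempty, fun A B => A1 A B, hmax⟩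
  obtain rfl : rev = revision Pl π := funext hrev
  obtain rfl : K = revision Pl π (Form.neg Form.fls) := hKdef
  have top_conj (φ : Form α) : revision Pl π ((Form.neg Form.fls).conj φ) = revision Pl π φ :=
    revision_congr fun v => by simp [Form.eval]
  refine ⟨hPl.cl_revision, hPl.mem_revision_self, fun φ => ?_, fun φ hφ => ?_,
    fun φ => hPl.revision_eq_cl_fls_iff (hpos φ), fun _ _ => revision_congr,
    hPl.revision_conj_subset, hPl.cl_revision_union_subset⟩
  · exact top_conj φ ▸ hPl.revision_conj_subset _ φ
  · exact top_conj φ ▸ hPl.cl_revision_union_subset _ φ hφ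

theorem stmt11 {W α D : Type} [PartialOrder D] [OrderBot D]
    (Pl : Set W → D) (π : W → α → Bool)
    (hempty : Pl (∅ : Set W) = ⊥)
    (A1 : ∀ A B : Set W, A ⊆ B → Pl A ≤ Pl B)
    (htot : ∀ A B : Set W, Pl A ≤ Pl B ∨ Pl B ≤ Pl A)
    (hmax : ∀ A B : Set W, Pl (A ∪ B) = Pl A ∨ Pl (A ∪ B) = Pl B)
    (hpos : ∀ φ : Form α, (∃ v, Form.eval v φ = true) → ⊥ < Pl (truthSet π φ))
    (K : Set (Form α)) (hKdef : K = {ψ | Cond Pl π (Form.neg Form.fls) ψ})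
    (rev : Form α → Set (Form α)) (hrev : ∀ φ, rev φ = {ψ | Cond Pl π φ ψ}) :
    (∀ φ, Cl (rev φ) = rev φ) ∧
    (∀ φ, φ ∈ rev φ) ∧
    (∀ φ, rev φ ⊆ Cl (K ∪ {φ})) ∧
    (∀ φ, Form.neg φ ∉ K → Cl (K ∪ {φ}) ⊆ rev φ) ∧
    (∀ φ, rev φ = Cl {Form.fls} ↔ Taut (Form.neg φ)) ∧
    (∀ φ ψ, (∀ v, Form.eval v φ = Form.eval v ψ) → rev φ = rev ψ) ∧
    (∀ φ ψ, rev (φ.conj ψ) ⊆ Cl (rev φ ∪ {ψ})) ∧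
    (∀ φ ψ, Form.neg ψ ∉ rev φ → Cl (rev φ ∪ {ψ}) ⊆ rev (φ.conj ψ)) :=
  stmt11_general Pl π hempty A1 hmax hpos K hKdef rev hrev
end

section
/- In a ranked plausibility structure where Pl(⟦φ⟧) > ⊥ exactly for the consistent formulas φ, the derived operator K ∘ φ = {ψ : φ ↝ ψ} satisfies postulate R7: K ∘ (φ ∧ ψ) ⊆ Cl(K∘φ ∪ {ψ}). -/
theorem stmt13 {W α D : Type} [PartialOrder D] [OrderBot D]
    (Pl : Set W → D) (π : W → α → Bool)
    (hempty : Pl (∅ : Set W) = ⊥)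
    (A1 : ∀ A B : Set W, A ⊆ B → Pl A ≤ Pl B)
    (htot : ∀ A B : Set W, Pl A ≤ Pl B ∨ Pl B ≤ Pl A)
    (hmax : ∀ A B : Set W, Pl (A ∪ B) = Pl A ∨ Pl (A ∪ B) = Pl B)
    (hpos : ∀ φ : Form α, ⊥ < Pl (truthSet π φ) ↔ (∃ v, Form.eval v φ = true))
    (rev : Form α → Set (Form α)) (hrev : ∀ φ, rev φ = {ψ | Cond Pl π φ ψ})
    (φ ψ : Form α) :
    rev (φ.conj ψ) ⊆ Cl (rev φ ∪ {ψ}) := by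
  intro χ hχ
  rw [hrev] at hχ
  intro v hv
  have hψ : Form.eval v ψ = true := hv ψ (Or.inr rfl)
  have hset1 : truthSet π (φ.conj (ψ.impl χ).neg)
      = truthSet π ((φ.conj ψ).conj χ.neg) := by
    ext w; simp [truthSet, Form.eval]; tauto
  have hsub1 : truthSet π ((φ.conj ψ).conj χ) ⊆ truthSet π (φ.conj (ψ.impl χ)) := by
    intro w; simp [truthSet, Form.eval]; tauto
  have hsub2 : truthSet π (φ.conj ψ.neg) ⊆ truthSet π (φ.conj (ψ.impl χ)) := by
    intro w; simp [truthSet, Form.eval]; tauto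
  have hsubφψ : truthSet π ((φ.conj ψ).conj χ.neg) ⊆ truthSet π (φ.conj ψ) := by
    intro w; simp [truthSet, Form.eval]; tauto
  have hunion : truthSet π φ = truthSet π (φ.conj ψ) ∪ truthSet π (φ.conj ψ.neg) := by
    ext w; cases h : Form.eval (π w) ψ <;> simp [truthSet, Form.eval, Set.mem_union, h]
  have himp : Form.eval v (ψ.impl χ) = true := by
    apply hv _ (Or.inl _)
    rw [hrev]
    show Cond Pl π φ (ψ.impl χ)
    rcases hχ with h | h
    · rcases (bot_le : ⊥ ≤ Pl (truthSet π φ)).lt_or_eq with hφ | hφ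
      · right
        have hXbot : Pl (truthSet π (φ.conj (ψ.impl χ).neg)) = ⊥ := by
          refine le_antisymm ?_ bot_le
          rw [hset1]
          exact (A1 _ _ hsubφψ).trans_eq h
        rw [hXbot]
        rcases hmax (truthSet π (φ.conj ψ)) (truthSet π (φ.conj ψ.neg)) with hm | hm
        · rw [← hunion] at hm; rw [hm, h] at hφ; exact absurd hφ (lt_irrefl _)
        · rw [← hunion] at hm
          exact hφ.trans_le (hm.le.trans (A1 _ _ hsub2))
      · exact Or.inl hφ.symm
    · right
      rw [hset1]
      exact h.trans_le (A1 _ _ hsub1)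
  simp [Form.eval, hψ] at himp
  exact himp
end

section
/- Let U = (W, d, π) be an update structure and define for A, B ⊆ W: min_U(A, B) = {w ∈ B : ∃w₀ ∈ A, ∀w' ∈ B, d(w₀, w') ⊀ d(w₀, w)}. Then the induced belief change operator ⋄ defined by ⟦φ ⋄ ψ⟧ = min_U(⟦φ⟧, ⟦ψ⟧) satisfies postulate U2: if ⊨ μ → φ then ⟦μ ⋄ φ⟧ = ⟦μ⟧. -/
theorem truthSet_subset_of_taut_impl {W α : Type} (π : W → α → Bool) {μ φ : Form α}
    (h : Taut (μ.impl φ)) : truthSet π μ ⊆ truthSet π φ :=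
  fun w (hw : Form.eval (π w) μ = true) =>
    show Form.eval (π w) φ = true by simpa [Form.eval, hw] using h (π w)

theorem minU_eq_of_subset {W D : Type} [PartialOrder D] (d : W → W → D) (z : D)
    (hz : ∀ x, z ≤ x) (hd : ∀ w w', d w w' = z ↔ w = w') {A B : Set W} (hAB : A ⊆ B) :
    minU d A B = A := by
  ext w
  constructor
  · rintro ⟨-, w₀, hw₀, hmin⟩
    have hself : d w₀ w₀ = z := (hd w₀ w₀).2 rfl
    have hw : d w₀ w = z := ((hz _).eq_of_not_lt (hself ▸ hmin w₀ (hAB hw₀))).symm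
    exact (hd w₀ w).1 hw ▸ hw₀
  · intro hw
    exact ⟨hAB hw, w, hw, fun w' _ => (hd w w).2 rfl ▸ (hz _).not_gt⟩

theorem stmt17_general {W α D : Type} [PartialOrder D]
    (d : W → W → D) (z : D) (hz : ∀ x, z ≤ x)
    (hd : ∀ w w', d w w' = z ↔ w = w')
    (π : W → α → Bool)
    (μ φ : Form α) (himp : Taut (μ.impl φ)) :
    minU d (truthSet π μ) (truthSet π φ) = truthSet π μ :=
  minU_eq_of_subset d z hz hd (truthSet_subset_of_taut_impl π himp)

theorem stmt17 {W α D : Type} [Fintype W] [Nonempty W] [PartialOrder D]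
    (d : W → W → D) (z : D) (hz : ∀ x, z ≤ x)
    (hd : ∀ w w', d w w' = z ↔ w = w')
    (π : W → α → Bool) (hinj : Function.Injective π)
    (hcover : ∀ φ : Form α, (∃ v, Form.eval v φ = true) → ∃ w, w ∈ truthSet π φ)
    (μ φ : Form α) (himp : Taut (μ.impl φ)) :
    minU d (truthSet π μ) (truthSet π φ) = truthSet π μ :=
  stmt17_general d z hz hd π μ φ himp
end
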